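/- Let m ≥ 1 and zⱼ = r₀(cos(π(j-1)/m), sin(π(j-1)/m), 0) ∈ ℝ³, r₀ > 0, j = 1, …, 2m. Then the function ψ(x) = -(1/(4π)) ∑_{j=1}^{2m} (-1)^{j+1}/|x - zⱼ| satisfies ψ(x) = O(1/|x|^{m+1}) as |x| → ∞. -/

import Mathlib

/-!
With `A = ‖x‖² + r₀²` and `uᵢ = 2⟪x, zᵢ⟫ / A` one has `1 / ‖x - zᵢ‖ = A^{-1/2} (1 - uᵢ)^{-1/2}`,
and `uᵢ = O(1/‖x‖)`. Replacing `(1 - u)^{-1/2}` by its Taylor polynomial of degree `m - 1` leaves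
an `O(uᵢ^m)` error, while the polynomial part drops out of the alternating sum because all the
moments `∑ᵢ (-1)^i ⟪x, zᵢ⟫^k`, `k < m`, vanish: writing `⟪x, zᵢ⟫` through the primitive `2m`-th
root of unity `ζ = e^{iπ/m}`, each moment becomes a combination of full geometric sums of powers
`ζ^s` with `0 < s < 2m`. What remains is `O(‖x‖⁻¹ · ‖x‖^{-m})`.
-/

open Real

/-- The point (a, b, c) of Euclidean 3-space. -/
noncomputable def pt3 (a b c : ℝ) : EuclideanSpace ℝ (Fin 3) :=
  (WithLp.equiv 2 (Fin 3 → ℝ)).symm ![a, b, c]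

open Finset Filter Asymptotics Bornology
open scoped Nat Topology RealInnerProductSpace

theorem IsPrimitiveRoot.sum_pow_pow_eq_zero {R : Type*} [CommRing R] [IsDomain R] {ζ : R} {n s : ℕ}
    (hζ : IsPrimitiveRoot ζ n) (hs₀ : s ≠ 0) (hsn : s < n) :
    ∑ i ∈ range n, (ζ ^ s) ^ i = 0 := by
  have h : (∑ i ∈ range n, (ζ ^ s) ^ i) * (ζ ^ s - 1) = 0 := by
    rw [geom_sum_mul, ← pow_mul, mul_comm, pow_mul, hζ.pow_eq_one, one_pow, sub_self]
  exact (mul_eq_zero.mp h).resolve_right (sub_ne_zero.mpr (hζ.pow_ne_one_of_pos_of_lt hs₀ hsn))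

theorem two_mul_exp_mul_I_mul_cos_add_sin (p q θ : ℝ) :
    2 * Complex.exp (θ * Complex.I) * (p * cos θ + q * sin θ : ℝ) =
      (p - q * Complex.I) * Complex.exp (θ * Complex.I) ^ 2 + (p + q * Complex.I) := by
  have hcs : ((cos θ : ℝ) : ℂ) ^ 2 + ((sin θ : ℝ) : ℂ) ^ 2 = 1 := by
    exact_mod_cast cos_sq_add_sin_sq θ
  rw [Complex.exp_mul_I, ← Complex.ofReal_cos, ← Complex.ofReal_sin, Complex.ofReal_add,
    Complex.ofReal_mul, Complex.ofReal_mul]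
  set c : ℂ := ((cos θ : ℝ) : ℂ)
  set s : ℂ := ((sin θ : ℝ) : ℂ)
  linear_combination (p + q * Complex.I) * hcs
    + (-p * s ^ 2 + 2 * q * c * s + q * s ^ 2 * Complex.I) * Complex.I_sq

theorem sum_neg_one_pow_mul_cos_add_sin_pow_eq_zero {m k : ℕ} (hk : k < m) (p q : ℝ) :
    ∑ i ∈ range (2 * m), (-1) ^ i * (p * cos (π * i / m) + q * sin (π * i / m)) ^ k = 0 := by
  set ζ : ℂ := Complex.exp (π * Complex.I / m)
  have hζ : IsPrimitiveRoot ζ (2 * m) := by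
    convert Complex.isPrimitiveRoot_exp (2 * m) (by omega) using 2
    push_cast; field_simp
  have hζm : ζ ^ m = -1 := by
    rw [← Complex.exp_nat_mul, mul_div_cancel₀ _ (by exact_mod_cast (by omega : m ≠ 0)),
      Complex.exp_pi_mul_I]
  have hζi (i : ℕ) : ζ ^ i = Complex.exp ((π * i / m : ℝ) * Complex.I) := by
    rw [← Complex.exp_nat_mul]
    push_cast; ring_nf
  have hterm (i : ℕ) :
      (2 : ℂ) ^ k * ((-1) ^ i * (p * cos (π * i / m) + q * sin (π * i / m)) ^ k : ℝ) =
      ∑ j ∈ range (k + 1), (p - q * Complex.I) ^ j * (p + q * Complex.I) ^ (k - j) * k.choose j *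
        (ζ ^ (m - k + 2 * j)) ^ i := by
    have hsign : ((-1) ^ i : ℂ) = ζ ^ ((m - k) * i) * (ζ ^ i) ^ k := by
      rw [← pow_mul, mul_comm i k, ← pow_add, ← add_mul, Nat.sub_add_cancel hk.le, pow_mul, hζm]
    calc (2 : ℂ) ^ k * ((-1) ^ i * (p * cos (π * i / m) + q * sin (π * i / m)) ^ k : ℝ)
        = ζ ^ ((m - k) * i) *
            (2 * ζ ^ i * (p * cos (π * i / m) + q * sin (π * i / m) : ℝ)) ^ k := by
          rw [Complex.ofReal_mul, Complex.ofReal_pow, Complex.ofReal_pow, Complex.ofReal_neg,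
            Complex.ofReal_one, hsign]
          ring
      _ = ∑ j ∈ range (k + 1), (p - q * Complex.I) ^ j * (p + q * Complex.I) ^ (k - j) *
            k.choose j * (ζ ^ (m - k + 2 * j)) ^ i := by
          rw [hζi i, two_mul_exp_mul_I_mul_cos_add_sin, ← hζi i, add_pow, mul_sum]
          refine sum_congr rfl fun j _ ↦ ?_
          rw [mul_pow]
          ring
  have hsum : ((∑ i ∈ range (2 * m),
      (-1) ^ i * (p * cos (π * i / m) + q * sin (π * i / m)) ^ k : ℝ) : ℂ) * 2 ^ k = 0 := by
    rw [Complex.ofReal_sum, sum_mul]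
    simp_rw [mul_comm _ ((2 : ℂ) ^ k), hterm]
    rw [sum_comm]
    refine sum_eq_zero fun j hj ↦ ?_
    rw [← mul_sum, hζ.sum_pow_pow_eq_zero (by omega) (by grind), mul_zero]
  exact_mod_cast (mul_eq_zero.mp hsum).resolve_right (by simp)

theorem exists_isBigO_sub_sum_pow {f : ℝ → ℝ} {s : Set ℝ} {n : ℕ} (hs : Convex ℝ s)
    (hs₀ : s ∈ 𝓝 0) (hf : ContDiffOn ℝ n f s) :
    ∃ a : ℕ → ℝ, (fun u ↦ f u - ∑ k ∈ range n, a k * u ^ k) =O[𝓝 0] (· ^ n) := by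
  have htaylor := taylor_isLittleO hs (mem_of_mem_nhds hs₀) hf
  rw [nhdsWithin_eq_nhds.mpr hs₀] at htaylor
  set a : ℕ → ℝ := fun k ↦ (k ! : ℝ)⁻¹ * iteratedDerivWithin k f s 0
  refine ⟨a, ?_⟩
  have hsplit : (fun u ↦ f u - ∑ k ∈ range n, a k * u ^ k) =
      fun u ↦ (f u - taylorWithinEval f n s 0 u) + a n * u ^ n := by
    funext u
    have hterm (k : ℕ) :
        ((k ! : ℝ)⁻¹ * (u - 0) ^ k) • iteratedDerivWithin k f s 0 = a k * u ^ k := by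
      simp only [sub_zero, smul_eq_mul, a]
      ring
    simp only [taylor_within_apply, sum_range_succ, hterm]
    ring
  rw [hsplit]
  exact (htaylor.isBigO.congr_right (by simp)).add (isBigO_const_mul_self _ _ _)

theorem sum_mul_sum_mul_pow_eq_zero_of_moments {ι : Type*} (s : Finset ι) (w v : ι → ℝ) {m : ℕ}
    (hmom : ∀ k < m, ∑ i ∈ s, w i * v i ^ k = 0) (a : ℕ → ℝ) (c : ℝ) :
    ∑ i ∈ s, w i * ∑ k ∈ range m, a k * (c * v i) ^ k = 0 := by
  simp_rw [mul_sum]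
  rw [sum_comm]
  refine sum_eq_zero fun k hk ↦ ?_
  calc ∑ i ∈ s, w i * (a k * (c * v i) ^ k) = a k * c ^ k * ∑ i ∈ s, w i * v i ^ k := by
        rw [mul_sum]
        exact sum_congr rfl fun i _ ↦ by ring
    _ = 0 := by rw [hmom k (mem_range.mp hk), mul_zero]

theorem inv_norm_sub_eq {E : Type*} [NormedAddCommGroup E] [InnerProductSpace ℝ E] {x : E}
    (hx : x ≠ 0) (z : E) :
    ‖x - z‖⁻¹ = (√(‖x‖ ^ 2 + ‖z‖ ^ 2))⁻¹ *
      (√(1 - 2 * ⟪x, z⟫ / (‖x‖ ^ 2 + ‖z‖ ^ 2)))⁻¹ := by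
  have hA : 0 < ‖x‖ ^ 2 + ‖z‖ ^ 2 := by positivity
  rw [← mul_inv, ← Real.sqrt_mul hA.le, mul_one_sub, mul_div_cancel₀ _ hA.ne',
    show ‖x‖ ^ 2 + ‖z‖ ^ 2 - 2 * ⟪x, z⟫ = ‖x - z‖ ^ 2 by rw [norm_sub_sq_real]; ring,
    Real.sqrt_sq (norm_nonneg _)]

theorem isBigO_inv_sqrt_norm_sq_add_sq {E : Type*} [SeminormedAddCommGroup E] (ρ : ℝ) :
    (fun x : E ↦ (√(‖x‖ ^ 2 + ρ ^ 2))⁻¹) =O[cobounded E] fun x ↦ ‖x‖⁻¹ := by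
  refine .of_bound 1 ?_
  filter_upwards [tendsto_norm_cobounded_atTop.eventually_gt_atTop 0] with x hx
  have hle : ‖x‖ ≤ √(‖x‖ ^ 2 + ρ ^ 2) := by
    simpa using abs_le_sqrt (le_add_of_nonneg_right (sq_nonneg ρ) : ‖x‖ ^ 2 ≤ ‖x‖ ^ 2 + ρ ^ 2)
  rw [one_mul, norm_inv, norm_inv, norm_norm, Real.norm_of_nonneg (sqrt_nonneg _)]
  exact inv_anti₀ hx hle

theorem isBigO_mul_inner_div_norm_sq_add_sq {E : Type*} [NormedAddCommGroup E]
    [InnerProductSpace ℝ E] (a ρ : ℝ) (z : E) :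
    (fun x ↦ a * ⟪x, z⟫ / (‖x‖ ^ 2 + ρ ^ 2)) =O[cobounded E] fun x ↦ ‖x‖⁻¹ := by
  refine .of_bound (|a| * ‖z‖) ?_
  filter_upwards [tendsto_norm_cobounded_atTop.eventually_gt_atTop 0] with x hx
  have hinner : |⟪x, z⟫| ≤ ‖x‖ * ‖z‖ := abs_real_inner_le_norm x z
  rw [norm_inv, norm_norm, Real.norm_eq_abs, abs_div, abs_mul,
    abs_of_pos (by positivity : 0 < ‖x‖ ^ 2 + ρ ^ 2)]
  calc |a| * |⟪x, z⟫| / (‖x‖ ^ 2 + ρ ^ 2) ≤ |a| * (‖x‖ * ‖z‖) / ‖x‖ ^ 2 :=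
        div_le_div₀ (by positivity) (by gcongr) (by positivity)
          (le_add_of_nonneg_right (sq_nonneg ρ))
    _ = |a| * ‖z‖ * ‖x‖⁻¹ := by field_simp

theorem isBigO_sum_div_norm_sub_of_moments {ι E : Type*} [NormedAddCommGroup E]
    [InnerProductSpace ℝ E] (s : Finset ι) (w : ι → ℝ) (z : ι → E) {ρ : ℝ}
    (hz : ∀ i ∈ s, ‖z i‖ = ρ) {m : ℕ}
    (hmom : ∀ x : E, ∀ k < m, ∑ i ∈ s, w i * ⟪x, z i⟫ ^ k = 0) :
    (fun x ↦ ∑ i ∈ s, w i / ‖x - z i‖) =O[cobounded E] fun x ↦ ‖x‖⁻¹ ^ (m + 1) := by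
  set g : ℝ → ℝ := fun u ↦ (√(1 - u))⁻¹
  have hg : ContDiffOn ℝ m g (Set.Iio 1) := fun u hu ↦
    have hu' : 0 < 1 - u := sub_pos.mpr hu
    ((contDiffAt_const.sub contDiffAt_id).sqrt hu'.ne').inv (sqrt_pos.mpr hu').ne'
      |>.contDiffWithinAt
  obtain ⟨a, ha⟩ := exists_isBigO_sub_sum_pow (convex_Iio 1) (Iio_mem_nhds one_pos) hg
  set A : E → ℝ := fun x ↦ ‖x‖ ^ 2 + ρ ^ 2
  set u : ι → E → ℝ := fun i x ↦ 2 * ⟪x, z i⟫ / A x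
  have hexpand (x : E) (hx : x ≠ 0) : ∑ i ∈ s, w i / ‖x - z i‖ =
      (√(A x))⁻¹ * ∑ i ∈ s, w i * (g (u i x) - ∑ k ∈ range m, a k * u i x ^ k) := by
    have hterm : ∀ i ∈ s, w i / ‖x - z i‖ = (√(A x))⁻¹ * (w i * g (u i x)) := by
      intro i hi
      rw [div_eq_mul_inv, inv_norm_sub_eq hx, hz i hi]
      ring
    have hpoly : ∑ i ∈ s, w i * ∑ k ∈ range m, a k * u i x ^ k = 0 := by
      simp only [u, mul_div_right_comm 2 _ (A x)]
      exact sum_mul_sum_mul_pow_eq_zero_of_moments s w _ (hmom x) a _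
    rw [sum_congr rfl hterm, ← mul_sum]
    simp_rw [mul_sub, sum_sub_distrib, hpoly, sub_zero]
  have hinv : Tendsto (fun x : E ↦ ‖x‖⁻¹) (cobounded E) (𝓝 0) :=
    tendsto_inv_atTop_zero.comp tendsto_norm_cobounded_atTop
  have hA := isBigO_inv_sqrt_norm_sq_add_sq (E := E) ρ
  have hu (i : ι) : u i =O[cobounded E] fun x ↦ ‖x‖⁻¹ :=
    isBigO_mul_inner_div_norm_sq_add_sq 2 ρ (z i)
  have hmain := hA.mul <| IsBigO.fun_sum (s := s) fun i _ ↦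
    ((ha.comp_tendsto ((hu i).trans_tendsto hinv)).trans ((hu i).pow m)).const_mul_left (w i)
  refine (hmain.congr' ?_ ?_)
  · filter_upwards [eventually_ne_cobounded 0] with x hx using (hexpand x hx).symm
  · exact .of_eq (funext fun x ↦ by simp [pow_succ'])

theorem inner_pt3_cos_sin (x : EuclideanSpace ℝ (Fin 3)) (r θ : ℝ) :
    ⟪x, pt3 (r * cos θ) (r * sin θ) 0⟫ = r * (x 0 * cos θ + x 1 * sin θ) := by
  simp [pt3, PiLp.inner_apply, Fin.sum_univ_three]
  ring

theorem norm_pt3_cos_sin (r θ : ℝ) : ‖pt3 (r * cos θ) (r * sin θ) 0‖ = |r| := by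
  rw [EuclideanSpace.norm_eq, ← sqrt_sq_eq_abs]
  congr 1
  simp [pt3, Fin.sum_univ_three]
  linear_combination r ^ 2 * sin_sq_add_cos_sq θ

theorem sum_neg_one_pow_mul_inner_pt3_pow_eq_zero (x : EuclideanSpace ℝ (Fin 3)) (r : ℝ)
    {m k : ℕ} (hk : k < m) :
    ∑ i ∈ range (2 * m), (-1) ^ i * ⟪x, pt3 (r * cos (π * i / m)) (r * sin (π * i / m)) 0⟫ ^ k
      = 0 := by
  calc ∑ i ∈ range (2 * m), (-1) ^ i * ⟪x, pt3 (r * cos (π * i / m)) (r * sin (π * i / m)) 0⟫ ^ k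
      = r ^ k * ∑ i ∈ range (2 * m),
          (-1) ^ i * (x 0 * cos (π * i / m) + x 1 * sin (π * i / m)) ^ k := by
        rw [mul_sum]
        refine sum_congr rfl fun i _ ↦ ?_
        rw [inner_pt3_cos_sin, mul_pow]
        ring
    _ = 0 := by rw [sum_neg_one_pow_mul_cos_add_sin_pow_eq_zero hk, mul_zero]

theorem exists_bound_of_isBigO_cobounded {E : Type*} [SeminormedAddCommGroup E] {f : E → ℝ}
    {n : ℕ} (h : f =O[cobounded E] fun x ↦ ‖x‖⁻¹ ^ n) :
    ∃ C R : ℝ, ∀ x : E, R ≤ ‖x‖ → |f x| ≤ C / ‖x‖ ^ n := by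
  obtain ⟨C, hC⟩ := h.bound
  rw [← comap_norm_atTop, eventually_comap, eventually_atTop] at hC
  obtain ⟨R, hR⟩ := hC
  exact ⟨C, R, fun x hx ↦ by simpa [div_eq_mul_inv] using hR ‖x‖ hx x rfl⟩

/-- The paper's vertex z_j (j = 1,…,2m) with charge (-1)^{j+1} is indexed here by
i = j - 1 ∈ range (2m), with charge (-1)^i. -/
theorem stmt15_general (m : ℕ) (r₀ : ℝ)
    (z : ℕ → EuclideanSpace ℝ (Fin 3))
    (hz : ∀ i : ℕ, z i = pt3 (r₀ * cos (π * i / m)) (r₀ * sin (π * i / m)) 0)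
    (ψ : EuclideanSpace ℝ (Fin 3) → ℝ)
    (hψ : ∀ x, (∀ i ∈ Finset.range (2 * m), x ≠ z i) →
      ψ x = -(1 / (4 * π)) * ∑ i ∈ Finset.range (2 * m), ((-1 : ℝ)) ^ i / ‖x - z i‖) :
    ∃ C R : ℝ, ∀ x : EuclideanSpace ℝ (Fin 3), R ≤ ‖x‖ →
      |ψ x| ≤ C / ‖x‖ ^ (m + 1) := by
  have hnorm (i : ℕ) : ‖z i‖ = |r₀| := by rw [hz, norm_pt3_cos_sin]
  have hpot := isBigO_sum_div_norm_sub_of_moments (range (2 * m)) (fun i ↦ (-1 : ℝ) ^ i) z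
    (fun i _ ↦ hnorm i) fun x k hk ↦ by
      simpa only [hz] using sum_neg_one_pow_mul_inner_pt3_pow_eq_zero x r₀ hk
  have hψ_eq : (fun x ↦ -(1 / (4 * π)) * ∑ i ∈ range (2 * m), (-1 : ℝ) ^ i / ‖x - z i‖)
      =ᶠ[cobounded _] ψ := by
    filter_upwards [tendsto_norm_cobounded_atTop.eventually_gt_atTop |r₀|] with x hx
    refine (hψ x fun i _ hxz ↦ ?_).symm
    rw [hxz, hnorm] at hx
    exact lt_irrefl _ hx
  exact exists_bound_of_isBigO_cobounded ((hpot.const_mul_left _).congr' hψ_eq .rfl)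

/-- the alternating sum of Newtonian potentials at the vertices of a
regular 2m-gon is O(1/|x|^{m+1}) at infinity.  The paper's vertex z_j (j = 1,…,2m)
with charge (-1)^{j+1} is indexed here by i = j - 1 ∈ range (2m), with charge (-1)^i. -/
theorem stmt15 (m : ℕ) (hm : 1 ≤ m) (r₀ : ℝ) (hr : 0 < r₀)
    (z : ℕ → EuclideanSpace ℝ (Fin 3))
    (hz : ∀ i : ℕ, z i = pt3 (r₀ * cos (π * i / m)) (r₀ * sin (π * i / m)) 0)
    (ψ : EuclideanSpace ℝ (Fin 3) → ℝ)
    (hψ : ∀ x, (∀ i ∈ Finset.range (2 * m), x ≠ z i) →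
      ψ x = -(1 / (4 * π)) * ∑ i ∈ Finset.range (2 * m), ((-1 : ℝ)) ^ i / ‖x - z i‖) :
    ∃ C R : ℝ, ∀ x : EuclideanSpace ℝ (Fin 3), R ≤ ‖x‖ →
      |ψ x| ≤ C / ‖x‖ ^ (m + 1) :=
  stmt15_general m r₀ z hz ψ hψ
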